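/- arXiv:2603.05221 — 3 statements merged into one kernel-verified Lean document; each statement's English description precedes it below -/
import Mathlib

section
/- Let X ⊂ ℤ^k be a finite set, let s be an element of the integer cone of X (i.e., s is a finite nonnegative-integer combination of elements of X), and let M = max over x ∈ X of the infinity norm of x. Then there exists a subset Y ⊆ X such that s belongs to the integer cone of Y and |Y| ≤ 2·k·log₂(4·k·M). -/
/-- `s` lies in the integer cone of the finite set `X ⊂ ℤ^k`:
it is a nonnegative-integer combination of elements of `X`. -/
def inIntegerCone {k : ℕ} (X : Finset (Fin k → ℤ)) (s : Fin k → ℤ) : Prop :=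
  ∃ c : (Fin k → ℤ) → ℕ, s = ∑ x ∈ X, (c x : ℤ) • x

/-!
If two disjoint subsets `A`, `B` of the support `Y` of `s` have equal sums, with `A` nonempty,
then subtracting `m • ∑ A` and adding `m • ∑ B`, where `m` is the least coefficient on `A`, kills a
coefficient; so `s` has an integer-cone representation whose support is dissociated (all subset
sums distinct). The `2^|Y|` subset sums of a dissociated `Y` are distinct points of the box
`[-|Y|M, |Y|M]^k`, whence `2^|Y| ≤ (2|Y|M + 1)^k`, and this forces `|Y| ≤ 2k log₂(4kM)`.
-/

open Finset

theorem AddDissociated.two_pow_card_le {G : Type*} [AddCommGroup G] {Y B : Finset G}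
    (hY : AddDissociated (Y : Set G)) (hB : ∀ T ⊆ Y, ∑ x ∈ T, x ∈ B) : 2 ^ #Y ≤ #B := by
  rw [← card_powerset]
  exact card_le_card_of_injOn (fun T ↦ ∑ x ∈ T, x) (fun T hT ↦ hB T (mem_powerset.1 hT))
    fun T hT U hU ↦ hY (by simpa using hT) (by simpa using hU)

theorem card_piFinset_Icc_neg (k N : ℕ) :
    #(Fintype.piFinset fun _ : Fin k ↦ Icc (-(N : ℤ)) N) = (2 * N + 1) ^ k := by
  rw [Fintype.card_piFinset_const, Int.card_Icc]
  congr
  omega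

theorem sum_mem_piFinset_Icc_neg {k M N : ℕ} {T : Finset (Fin k → ℤ)}
    (hM : ∀ x ∈ T, ∀ i, |x i| ≤ M) (hN : #T * M ≤ N) :
    ∑ x ∈ T, x ∈ Fintype.piFinset fun _ : Fin k ↦ Icc (-(N : ℤ)) N := by
  refine Fintype.mem_piFinset.2 fun i ↦ mem_Icc.2 (abs_le.1 ?_)
  calc |(∑ x ∈ T, x) i| ≤ ∑ x ∈ T, |x i| := by
        rw [Finset.sum_apply]
        exact abs_sum_le_sum_abs _ _
    _ ≤ #T • (M : ℤ) := sum_le_card_nsmul _ _ _ fun x hx ↦ hM x hx i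
    _ ≤ N := by
        rw [nsmul_eq_mul]
        exact_mod_cast hN

theorem AddDissociated.two_pow_card_le_of_abs_le {k M : ℕ} {Y : Finset (Fin k → ℤ)}
    (hY : AddDissociated (Y : Set (Fin k → ℤ))) (hM : ∀ x ∈ Y, ∀ i, |x i| ≤ M) :
    2 ^ #Y ≤ (2 * #Y * M + 1) ^ k := by
  rw [mul_assoc, ← card_piFinset_Icc_neg]
  exact hY.two_pow_card_le fun T hT ↦
    sum_mem_piFinset_Icc_neg (fun x hx ↦ hM x (hT hx)) (Nat.mul_le_mul_right M (card_le_card hT))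

theorem inIntegerCone.exists_erase_of_sum_eq {k : ℕ} {Y A B : Finset (Fin k → ℤ)}
    {s : Fin k → ℤ} (hs : inIntegerCone Y s) (hA : A ⊆ Y) (hB : B ⊆ Y) (hAB : Disjoint A B)
    (hAne : A.Nonempty) (hsum : ∑ x ∈ A, x = ∑ x ∈ B, x) :
    ∃ y ∈ Y, inIntegerCone (Y.erase y) s := by
  classical
  obtain ⟨c, rfl⟩ := hs
  obtain ⟨y, hyA, hy⟩ := A.exists_min_image c hAne
  let c' : (Fin k → ℤ) → ℕ := fun x ↦
    if x ∈ A then c x - c y else if x ∈ B then c x + c y else c x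
  have hc' : ∀ x ∈ Y, (c' x : ℤ) • x =
      (c x : ℤ) • x - (if x ∈ A then (c y : ℤ) • x else 0) + (if x ∈ B then (c y : ℤ) • x else 0) := by
    intro x _
    by_cases hxA : x ∈ A
    · simp [c', hxA, disjoint_left.1 hAB hxA, Nat.cast_sub (hy x hxA), sub_smul]
    · by_cases hxB : x ∈ B <;> simp [c', hxA, hxB, add_smul]
  refine ⟨y, hA hyA, c', ?_⟩
  rw [sum_erase _ (by simp [c', hyA]), sum_congr rfl hc', sum_add_distrib, sum_sub_distrib,
    sum_ite_mem, sum_ite_mem, inter_eq_right.2 hA, inter_eq_right.2 hB, ← smul_sum, ← smul_sum,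
    hsum, sub_add_cancel]

theorem inIntegerCone.exists_erase_of_not_addDissociated {k : ℕ} {Y : Finset (Fin k → ℤ)}
    {s : Fin k → ℤ} (hs : inIntegerCone Y s) (hY : ¬AddDissociated (Y : Set (Fin k → ℤ))) :
    ∃ y ∈ Y, inIntegerCone (Y.erase y) s := by
  obtain ⟨A, B, hA, hB, hAB, hne, hsum⟩ := not_addDissociated_iff_exists_disjoint.1 hY
  rw [coe_subset] at hA hB
  rcases A.eq_empty_or_nonempty with rfl | hAne
  · exact hs.exists_erase_of_sum_eq hB hA hAB.symm (nonempty_iff_ne_empty.2 hne.symm) hsum.symm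
  · exact hs.exists_erase_of_sum_eq hA hB hAB hAne hsum

theorem exists_subset_addDissociated_inIntegerCone {k : ℕ} (X : Finset (Fin k → ℤ))
    {s : Fin k → ℤ} (hs : inIntegerCone X s) :
    ∃ Y ⊆ X, AddDissociated (Y : Set (Fin k → ℤ)) ∧ inIntegerCone Y s := by
  induction X using Finset.strongInduction with
  | H X ih =>
    by_cases hX : AddDissociated (X : Set (Fin k → ℤ))
    · exact ⟨X, subset_rfl, hX, hs⟩
    obtain ⟨y, hy, hs'⟩ := hs.exists_erase_of_not_addDissociated hX
    obtain ⟨Y, hYX, hY, hYs⟩ := ih _ (erase_ssubset hy) hs'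
    exact ⟨Y, hYX.trans (erase_subset _ _), hY, hYs⟩

theorem le_two_mul_logb_of_two_pow_le {k M n : ℕ} (h : 2 ^ n ≤ (2 * n * M + 1) ^ k) :
    (n : ℝ) ≤ 2 * k * Real.logb 2 (4 * k * M) := by
  by_cases hkM : k = 0 ∨ M = 0
  · obtain rfl : n = 0 := by
      have : 2 ^ n ≤ 1 := by rcases hkM with rfl | rfl <;> simpa using h
      have := n.lt_two_pow_self
      omega
    rcases hkM with rfl | rfl <;> simp
  obtain ⟨hk, hM⟩ := not_or.1 hkM
  set u : ℝ := n / (2 * k) with hu_def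
  have hn : (n : ℝ) = 2 * k * u := by rw [hu_def]; field_simp
  rw [hn]
  gcongr
  rw [Real.le_logb_iff_rpow_le one_lt_two (by positivity)]
  by_contra! hlt
  set a : ℝ := 2 ^ u with ha
  have h4kM : (4 : ℝ) ≤ 4 * k * M := by
    have : (1 : ℝ) ≤ k * M := by exact_mod_cast Nat.one_le_iff_ne_zero.2 (by positivity)
    linarith
  have ha2 : a ^ 2 ≤ 4 * k * M * u + 1 := by
    have : (a ^ 2) ^ k ≤ (2 * n * M + 1 : ℝ) ^ k := by
      rw [← pow_mul, ha, ← Real.rpow_mul_natCast zero_le_two]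
      calc (2 : ℝ) ^ (u * ↑(2 * k)) = 2 ^ n := by
            rw [← Real.rpow_natCast, hn]; push_cast; ring_nf
        _ ≤ _ := by exact_mod_cast h
    rw [pow_le_pow_iff_left₀ (by positivity) (by positivity) hk, hn] at this
    linarith
  have hu : 1 ≤ u := by
    by_contra! hu
    have : a < 2 ^ (1 : ℝ) := Real.rpow_lt_rpow_of_exponent_lt one_lt_two hu
    linarith [Real.rpow_one (2 : ℝ)]
  have hbern : 1 + u ≤ a := by
    simpa [one_add_one_eq_two] using one_add_mul_self_le_rpow_one_add (s := 1) (by norm_num) hu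
  -- `a ^ 2 > 4kM * a ≥ 4kM * (1 + u) ≥ 4kM * u + 4`
  nlinarith

theorem stmt0_general {k : ℕ} (X : Finset (Fin k → ℤ)) (s : Fin k → ℤ) (M : ℕ)
    (hMmax : ∀ x ∈ X, ∀ i, |x i| ≤ (M : ℤ))
    (hs : inIntegerCone X s) :
    ∃ Y ⊆ X, inIntegerCone Y s ∧
      (Y.card : ℝ) ≤ 2 * k * Real.logb 2 (4 * k * M) := by
  obtain ⟨Y, hYX, hY, hYs⟩ := exists_subset_addDissociated_inIntegerCone X hs
  exact ⟨Y, hYX, hYs, le_two_mul_logb_of_two_pow_le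
    (hY.two_pow_card_le_of_abs_le fun x hx ↦ hMmax x (hYX hx))⟩

theorem stmt0 {k : ℕ} (X : Finset (Fin k → ℤ)) (s : Fin k → ℤ) (M : ℕ)
    (hM : 1 ≤ M)
    (hMmax : ∀ x ∈ X, ∀ i, |x i| ≤ (M : ℤ))
    (hs : inIntegerCone X s) :
    ∃ Y ⊆ X, inIntegerCone Y s ∧
      (Y.card : ℝ) ≤ 2 * k * Real.logb 2 (4 * k * M) :=
  stmt0_general X s M hMmax hs
end

section
/- Let s ∈ ℕ^d and t ∈ {0,1}^d with ∑_{j=1}^{d} s[j]·2^{j−1} = ∑_{j=1}^{d} t[j]·2^{j−1} < 2^d. Then s can be transformed into t by a finite sequence of moves, each replacing some s with s[j] ≥ 2 by s − 2e_j + e_{j+1} (for j < d). -/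
/-!
A carry preserves `binVal` and lowers the coordinate sum by one, so carrying terminates. A carry
is available at every entry `≥ 2`: such an entry in the top position would already force the value
to be at least `2 ^ d`. Carrying until all entries are `≤ 1` therefore ends at a `0/1` vector with
the value of `s`, which is `t` by uniqueness of binary expansions.
-/

/-- Value of a vector `v ∈ ℕ^d` read as a (generalised) binary representation:
`∑_j v[j] · 2^j` (0-indexed). -/
def binVal {d : ℕ} (v : Fin d → ℕ) : ℕ :=
  ∑ j : Fin d, v j * 2 ^ (j : ℕ)

/-- A carry move: subtract 2 from coordinate `j` and add 1 to coordinate `j+1`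
(valid only when the `j`-th entry is at least 2). -/
def carryStep {d : ℕ} (s s' : Fin d → ℕ) : Prop :=
  ∃ j : ℕ, ∃ hj : j + 1 < d, 2 ≤ s ⟨j, by omega⟩ ∧
    s' = Function.update (Function.update s ⟨j, by omega⟩ (s ⟨j, by omega⟩ - 2))
          ⟨j + 1, hj⟩ (s ⟨j + 1, hj⟩ + 1)

open Finset

lemma binVal_eq_ofDigits {d : ℕ} (v : Fin d → ℕ) : binVal v = Nat.ofDigits 2 (List.ofFn v) := by
  simp only [binVal, Nat.ofDigits_eq_sum_mapIdx, List.mapIdx_eq_ofFn, List.get_ofFn,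
    List.length_ofFn, Fin.val_cast, List.sum_ofFn]
  rfl

lemma eq_of_binVal_eq_of_le_one {d : ℕ} {u v : Fin d → ℕ} (hu : ∀ j, u j ≤ 1) (hv : ∀ j, v j ≤ 1)
    (h : binVal u = binVal v) : u = v := by
  rw [binVal_eq_ofDigits, binVal_eq_ofDigits] at h
  refine List.ofFn_injective (Nat.ofDigits_inj_of_len_eq one_lt_two (by simp) ?_ ?_ h)
  · simpa [List.forall_mem_ofFn_iff, Nat.lt_succ_iff] using hu
  · simpa [List.forall_mem_ofFn_iff, Nat.lt_succ_iff] using hv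

lemma binVal_add {d : ℕ} (u v : Fin d → ℕ) : binVal (u + v) = binVal u + binVal v := by
  simp only [binVal, Pi.add_apply, add_mul, sum_add_distrib]

lemma binVal_single {d : ℕ} (k : Fin d) (c : ℕ) : binVal (Pi.single k c) = c * 2 ^ (k : ℕ) := by
  simp [binVal, Pi.single_apply]

lemma mul_two_pow_le_binVal {d : ℕ} (s : Fin d → ℕ) (k : Fin d) :
    s k * 2 ^ (k : ℕ) ≤ binVal s :=
  single_le_sum (f := fun j => s j * 2 ^ (j : ℕ)) (fun _ _ => Nat.zero_le _) (mem_univ k)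

namespace carryStep

variable {d : ℕ} {s s' : Fin d → ℕ}

-- The move in additive form, free of the truncated subtraction `s j - 2`.
lemma exists_add_single_eq (h : carryStep s s') :
    ∃ (i : Fin d) (hi : (i : ℕ) + 1 < d),
      s' + Pi.single i 2 = s + Pi.single ⟨i + 1, hi⟩ 1 := by
  obtain ⟨j, hj, h2, rfl⟩ := h
  refine ⟨⟨j, by omega⟩, hj, funext fun ⟨k, hk⟩ => ?_⟩
  simp only [Pi.add_apply, Function.update_apply, Pi.single_apply, Fin.mk.injEq]
  split_ifs <;> subst_vars <;> omega

lemma binVal_eq (h : carryStep s s') : binVal s' = binVal s := by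
  obtain ⟨i, hi, heq⟩ := h.exists_add_single_eq
  have := congrArg binVal heq
  simp only [binVal_add, binVal_single, pow_succ] at this
  omega

lemma sum_lt (h : carryStep s s') : ∑ j, s' j < ∑ j, s j := by
  obtain ⟨i, hi, heq⟩ := h.exists_add_single_eq
  have := congrArg (fun v => ∑ j, v j) heq
  simp only [Pi.add_apply, sum_add_distrib, sum_pi_single', mem_univ, if_true] at this
  omega

end carryStep

lemma exists_carryStep_of_two_le {d : ℕ} {s : Fin d → ℕ} {i : Fin d} (hi : 2 ≤ s i)
    (hlt : binVal s < 2 ^ d) : ∃ s', carryStep s s' := by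
  have hid : (i : ℕ) + 1 < d := by
    by_contra! hd
    have : 2 ^ d ≤ s i * 2 ^ (i : ℕ) :=
      calc 2 ^ d ≤ 2 ^ ((i : ℕ) + 1) := Nat.pow_le_pow_right two_pos hd
        _ = 2 * 2 ^ (i : ℕ) := by ring
        _ ≤ s i * 2 ^ (i : ℕ) := Nat.mul_le_mul_right _ hi
    exact absurd (this.trans (mul_two_pow_le_binVal s i)) hlt.not_ge
  exact ⟨_, i, hid, hi, rfl⟩

theorem exists_reflTransGen_carryStep_le_one {d : ℕ} (s : Fin d → ℕ) (hlt : binVal s < 2 ^ d) :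
    ∃ t, (∀ j, t j ≤ 1) ∧ binVal t = binVal s ∧ Relation.ReflTransGen carryStep s t := by
  by_cases hs : ∀ j, s j ≤ 1
  · exact ⟨s, hs, rfl, .refl⟩
  push Not at hs
  obtain ⟨i, hi⟩ := hs
  obtain ⟨s', hstep⟩ := exists_carryStep_of_two_le hi hlt
  obtain ⟨t, ht, htval, hst⟩ := exists_reflTransGen_carryStep_le_one s' (hstep.binVal_eq ▸ hlt)
  exact ⟨t, ht, htval.trans hstep.binVal_eq, .head hstep hst⟩
termination_by ∑ j, s j
decreasing_by exact hstep.sum_lt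

theorem stmt14 {d : ℕ} (s t : Fin d → ℕ)
    (ht : ∀ j, t j ≤ 1)
    (hval : binVal s = binVal t)
    (hlt : binVal s < 2 ^ d) :
    Relation.ReflTransGen carryStep s t := by
  obtain ⟨t', ht', ht'val, hst'⟩ := exists_reflTransGen_carryStep_le_one s hlt
  rwa [← eq_of_binVal_eq_of_le_one ht' ht (ht'val.trans hval)]
end

section
/- Suppose a counter configuration evolves so that the quantity (x + x̄)·7^{z₁} never increases during a loop, the loop decreases z₁ by 1 per iteration while at most multiplying x + x̄ by 7, initially (x + x̄)·7^{z₁} ≤ z₂, and at termination z₁ = 0 and x = z₂ with x̄ = 0. Then initially (x + x̄)·7^{z₁} = z₂ and every loop iteration multiplied x + x̄ by exactly 7. -/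
/-!
The potential `(x i + xbar i) * 7 ^ (T - i)` does not increase along the loop, starts at most
`z₂` and ends at `x T = z₂`. It is therefore constant, and a step that keeps it constant must
multiply `x + xbar` by exactly `7`.
-/

open Set

theorem AntitoneOn.eq_right_of_le {α β : Type*} [Preorder α] [PartialOrder β] {f : α → β}
    {a b c : α} (hf : AntitoneOn f (Icc a b)) (hab : f a ≤ f b) (hc : c ∈ Icc a b) :
    f c = f b := by
  have ha : a ∈ Icc a b := left_mem_Icc.2 (hc.1.trans hc.2)
  have hb : b ∈ Icc a b := right_mem_Icc.2 (hc.1.trans hc.2)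
  exact le_antisymm ((hf ha hc hc.1).trans hab) (hf hc hb hc.2)

def weightedSize (b T : ℕ) (s : ℕ → ℕ) (i : ℕ) : ℕ := s i * b ^ (T - i)

section weightedSize

variable {b T i : ℕ} {s : ℕ → ℕ}

theorem weightedSize_of_lt (hi : i < T) :
    weightedSize b T s i = b * s i * b ^ (T - (i + 1)) := by
  rw [weightedSize, show T - i = T - (i + 1) + 1 by omega, pow_succ]
  ring

theorem weightedSize_succ_le (hi : i < T) (h : s (i + 1) ≤ b * s i) :
    weightedSize b T s (i + 1) ≤ weightedSize b T s i := by
  rw [weightedSize_of_lt hi]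
  exact Nat.mul_le_mul_right _ h

theorem eq_mul_of_weightedSize_succ_eq (hb : 0 < b) (hi : i < T)
    (h : weightedSize b T s (i + 1) = weightedSize b T s i) : s (i + 1) = b * s i := by
  rw [weightedSize_of_lt hi, weightedSize] at h
  exact Nat.eq_of_mul_eq_mul_right (pow_pos hb _) h

theorem antitoneOn_weightedSize (h : ∀ i < T, s (i + 1) ≤ b * s i) :
    AntitoneOn (weightedSize b T s) (Icc 0 T) :=
  antitoneOn_of_add_one_le ordConnected_Icc fun i _ _ hi =>
    have hiT : i < T := hi.2
    weightedSize_succ_le hiT (h i hiT)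

end weightedSize

theorem stmt19 (T z₂ : ℕ) (x xbar : ℕ → ℕ)
    (hstep : ∀ i < T, x (i + 1) + xbar (i + 1) ≤ 7 * (x i + xbar i))
    (hinit : (x 0 + xbar 0) * 7 ^ T ≤ z₂)
    (hfinx : x T = z₂) (hfinxbar : xbar T = 0) :
    (x 0 + xbar 0) * 7 ^ T = z₂ ∧
    ∀ i < T, x (i + 1) + xbar (i + 1) = 7 * (x i + xbar i) := by
  set w := weightedSize 7 T fun i => x i + xbar i
  have hwT : w T = z₂ := by simp [w, weightedSize, hfinx, hfinxbar]
  have hw0 : w 0 ≤ w T := hwT ▸ hinit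
  have hconst : ∀ i ≤ T, w i = z₂ := fun i hi =>
    hwT ▸ (antitoneOn_weightedSize hstep).eq_right_of_le hw0 ⟨i.zero_le, hi⟩
  refine ⟨by simpa [w, weightedSize] using hconst 0 T.zero_le, fun i hi => ?_⟩
  exact eq_mul_of_weightedSize_succ_eq (by norm_num) hi
    ((hconst (i + 1) hi).trans (hconst i hi.le).symm)
end
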